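/- arXiv:0708.3289 — 2 statements merged into one kernel-verified Lean document; each statement's English description precedes it below -/
import Mathlib

section
/- Let f ∈ L¹(ℝⁿ) and suppose there exist δ > 0, C₀ > 0, and α ∈ (0,1) such that ‖f(·−y) − f(·)‖_{L¹(ℝⁿ)} ≤ C₀|y|^α whenever |y| < δ. Then there exist C > 0 and ε₀ > 0 such that for all 0 < ε < ε₀ and all ξ ∈ ℝⁿ, the Fourier transform satisfies |F f(ξ)| ≤ C(exp(−πε²|ξ|²) + ε^α). -/
/-!
Translating `f` by a vector `y` with `⟪y, ξ⟫ = -1/2` multiplies `𝓕 f ξ` by `-1`, so `𝓕 f ξ` is half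
the Fourier transform of `f - f(· - y)`, and `|y| = 1 / (2|ξ|)`. At high frequencies `ε|ξ| > 1`
this shift is shorter than `ε`, and the Hölder modulus bounds `|𝓕 f ξ|` by `C₀ ε^α`; at low
frequencies `ε|ξ| ≤ 1` the trivial bound `|𝓕 f ξ| ≤ ‖f‖₁` is at most `e^π ‖f‖₁ exp(-π ε² |ξ|²)`.
-/

open MeasureTheory Real
open scoped FourierTransform

section HalfPeriod

variable {E V : Type*} [NormedAddCommGroup E] [NormedSpace ℂ E]
  [NormedAddCommGroup V] [InnerProductSpace ℝ V] [FiniteDimensional ℝ V]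
  [MeasurableSpace V] [BorelSpace V] {f : V → E}

theorem exists_norm_fourier_le_half_integral_norm_sub_translate (hf : Integrable f) {ξ : V}
    (hξ : ξ ≠ 0) :
    ∃ y : V, ‖y‖ = (2 * ‖ξ‖)⁻¹ ∧ ‖𝓕 f ξ‖ ≤ (∫ x, ‖f (x - y) - f x‖) / 2 := by
  set y : V := -((1 / (2 * ‖ξ‖ ^ 2) : ℝ) • ξ)
  have hξpos : 0 < ‖ξ‖ := norm_pos_iff.2 hξ
  refine ⟨y, ?_, ?_⟩
  · rw [norm_neg, norm_smul, Real.norm_of_nonneg (by positivity)]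
    field_simp
  · rw [Real.fourier_eq, fourierIntegral_eq_half_sub_half_period_translate hξ hf, norm_smul,
      norm_div, norm_one, Complex.norm_two, one_div_mul_eq_div]
    gcongr
    refine (norm_integral_le_integral_norm _).trans_eq (integral_congr_ae ?_)
    filter_upwards with x
    rw [Circle.norm_smul, norm_sub_rev, sub_neg_eq_add]

theorem norm_fourier_le_of_integral_norm_sub_translate_le {δ C₀ α : ℝ}
    (hmod : ∀ y : V, ‖y‖ < δ → (∫ x, ‖f (x - y) - f x‖) ≤ C₀ * ‖y‖ ^ α)
    (hf : Integrable f) {ξ : V} (hξ : ξ ≠ 0) (hξδ : (2 * ‖ξ‖)⁻¹ < δ) :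
    ‖𝓕 f ξ‖ ≤ C₀ * (2 * ‖ξ‖)⁻¹ ^ α / 2 := by
  obtain ⟨y, hy, hle⟩ := exists_norm_fourier_le_half_integral_norm_sub_translate hf hξ
  rw [← hy] at hξδ ⊢
  exact hle.trans (by gcongr; exact hmod y hξδ)

end HalfPeriod

theorem norm_fourierIntegral_le_exp_pi_mul_integral_norm_mul_gaussian {E V : Type*}
    [NormedAddCommGroup E] [NormedSpace ℂ E] [NormedAddCommGroup V] [InnerProductSpace ℝ V]
    [MeasurableSpace V]
    (μ : Measure V) (f : V → E) {ε : ℝ} {ξ : V} (hε : 0 ≤ ε) (hεξ : ε * ‖ξ‖ ≤ 1) :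
    ‖VectorFourier.fourierIntegral 𝐞 μ (innerₗ V) f ξ‖ ≤
      exp π * (∫ x, ‖f x‖ ∂μ) * exp (-π * ε ^ 2 * ‖ξ‖ ^ 2) := by
  have hsq : (ε * ‖ξ‖) ^ 2 ≤ 1 := pow_le_one₀ (by positivity) hεξ
  have hexp : 1 ≤ exp π * exp (-π * ε ^ 2 * ‖ξ‖ ^ 2) := by
    rw [← exp_add, one_le_exp_iff]
    nlinarith [pi_pos]
  calc _ ≤ ∫ x, ‖f x‖ ∂μ := VectorFourier.norm_fourierIntegral_le_integral_norm _ _ _ _ _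
    _ ≤ (∫ x, ‖f x‖ ∂μ) * (exp π * exp (-π * ε ^ 2 * ‖ξ‖ ^ 2)) :=
        le_mul_of_one_le_right (integral_nonneg fun _ ↦ norm_nonneg _) hexp
    _ = _ := by ring

/-- Quantitative Riemann–Lebesgue: if the L¹-modulus of continuity of `f` is
Hölder of order `α`, then the Fourier transform satisfies a two-parameter bound. -/
theorem fourier_decay_of_holder_modulus (n : ℕ) (f : EuclideanSpace ℝ (Fin n) → ℂ)
    (hf : Integrable f) (δ C₀ α : ℝ) (hδ : 0 < δ) (hC₀ : 0 < C₀)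
    (hα : α ∈ Set.Ioo (0 : ℝ) 1)
    (hmod : ∀ y : EuclideanSpace ℝ (Fin n), ‖y‖ < δ →
      (∫ x, ‖f (x - y) - f x‖) ≤ C₀ * ‖y‖ ^ α) :
    ∃ C > 0, ∃ ε₀ > 0, ∀ ε : ℝ, 0 < ε → ε < ε₀ → ∀ ξ,
      ‖𝓕 f ξ‖ ≤ C * (Real.exp (-π * ε ^ 2 * ‖ξ‖ ^ 2) + ε ^ α) := by
  set I := ∫ x, ‖f x‖
  have hI : 0 ≤ I := integral_nonneg fun _ ↦ norm_nonneg _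
  refine ⟨exp π * I + C₀, add_pos_of_nonneg_of_pos (by positivity) hC₀, δ, hδ,
    fun ε hε hεδ ξ ↦ ?_⟩
  have hεα : 0 ≤ ε ^ α := rpow_nonneg hε.le α
  have hgauss : 0 ≤ exp (-π * ε ^ 2 * ‖ξ‖ ^ 2) := (exp_pos _).le
  rcases le_or_gt (ε * ‖ξ‖) 1 with hlow | hhigh
  · calc ‖𝓕 f ξ‖ ≤ exp π * I * exp (-π * ε ^ 2 * ‖ξ‖ ^ 2) :=
          norm_fourierIntegral_le_exp_pi_mul_integral_norm_mul_gaussian volume f hε.le hlow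
      _ ≤ (exp π * I + C₀) * (exp (-π * ε ^ 2 * ‖ξ‖ ^ 2) + ε ^ α) := by
          gcongr <;> linarith
  · have hξ : ξ ≠ 0 := by rintro rfl; simp at hhigh; linarith
    have hshift : (2 * ‖ξ‖)⁻¹ < ε := by
      rw [inv_lt_iff_one_lt_mul₀ (by positivity)]
      nlinarith [norm_nonneg ξ]
    calc ‖𝓕 f ξ‖ ≤ C₀ * (2 * ‖ξ‖)⁻¹ ^ α / 2 :=
          norm_fourier_le_of_integral_norm_sub_translate_le hmod hf hξ (hshift.trans hεδ)
      _ ≤ C₀ * ε ^ α := by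
          have : (2 * ‖ξ‖)⁻¹ ^ α ≤ ε ^ α := rpow_le_rpow (by positivity) hshift.le hα.1.le
          nlinarith
      _ ≤ (exp π * I + C₀) * (exp (-π * ε ^ 2 * ‖ξ‖ ^ 2) + ε ^ α) := by
          nlinarith [mul_nonneg (exp_pos π).le hI]
end

section
/- Let Ω ⊂ ℝⁿ be a bounded domain with C¹ boundary and let f ∈ C^α(closure Ω) be α-Hölder continuous for some α ∈ (0,1). Let f̂ denote the extension of f by zero to all of ℝⁿ. Then there exist δ > 0 and C > 0 such that ‖f̂(·−y) − f̂(·)‖_{L¹(ℝⁿ)} ≤ C|y|^α for all y ∈ ℝⁿ with |y| ≤ δ. -/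
/-!
If exactly one of `x - y`, `x` lies in `Ω`, the segment between them crosses `∂Ω`, so `x` lies in
the closed `‖y‖`-neighbourhood `T` of `∂Ω`; there the integrand is at most `sup |f|`, and on the
rest of `Ω` it is at most `K ‖y‖ ^ α`. Hence the `L¹` norm is at most
`K |Ω| ‖y‖ ^ α + sup |f| · |T|`, and it remains to show `|T| = O(‖y‖)`.

Near a boundary point `∂Ω` is the zero set of a `C¹` function `g` with `Dg ≠ 0`. On a small ball,
`g` varies at a rate at least `‖Dg(p)‖ / 2` along a fixed direction `v` and is Lipschitz, so
`T` is contained in a slab `{|g| ≤ C ‖y‖}`; roughly `ρ / ‖y‖` disjoint translates of this slab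
along `v` fit in a ball of radius `2ρ`, which bounds its volume by `O(‖y‖)`. Compactness of
`∂Ω` turns these local bounds into a global one.
-/

open MeasureTheory Real

/-- `Ω` has `C¹` boundary: near every boundary point the set is the sublevel set of a
`C¹` defining function with nonvanishing differential. -/
def HasC1Boundary {n : ℕ} (Ω : Set (EuclideanSpace ℝ (Fin n))) : Prop :=
  ∀ x ∈ frontier Ω, ∃ U : Set (EuclideanSpace ℝ (Fin n)), IsOpen U ∧ x ∈ U ∧
    ∃ g : EuclideanSpace ℝ (Fin n) → ℝ, ContDiff ℝ 1 g ∧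
      (∀ z ∈ U, fderiv ℝ g z ≠ 0) ∧
      Ω ∩ U = {z ∈ U | g z < 0} ∧
      frontier Ω ∩ U = {z ∈ U | g z = 0}

open Metric Set Filter Topology
open scoped ENNReal

theorem IsPreconnected.inter_frontier_nonempty {X : Type*} [TopologicalSpace X] {s t : Set X}
    (hs : IsPreconnected s) (hst : (s ∩ t).Nonempty) (hsnt : (s \ t).Nonempty) :
    (s ∩ frontier t).Nonempty := by
  by_contra h
  have hcover : s ⊆ interior t ∪ (closure t)ᶜ := fun x hx => by
    by_cases hxt : x ∈ closure t
    · exact Or.inl (by_contra fun hxi => h ⟨x, hx, hxt, hxi⟩)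
    · exact Or.inr hxt
  obtain ⟨a, has, hat⟩ := hst
  obtain ⟨b, hbs, hbt⟩ := hsnt
  have ha : a ∈ interior t := (hcover has).resolve_right (not_not.2 (subset_closure hat))
  have hb : b ∈ (closure t)ᶜ := (hcover hbs).resolve_left fun hbi => hbt (interior_subset hbi)
  obtain ⟨z, -, hzi, hzc⟩ := hs _ _ isOpen_interior isClosed_closure.isOpen_compl hcover
    ⟨a, has, ha⟩ ⟨b, hbs, hb⟩
  exact hzc (interior_subset_closure hzi)

theorem continuousOn_of_abs_sub_le_mul_rpow {X : Type*} [PseudoMetricSpace X] {s : Set X}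
    {f : X → ℝ} {K α : ℝ} (hα : 0 < α) (hf : ∀ x ∈ s, ∀ z ∈ s, |f x - f z| ≤ K * dist x z ^ α) :
    ContinuousOn f s := by
  intro x hx
  have hlim : Tendsto (fun z => K * dist z x ^ α) (𝓝 x) (𝓝 0) := by
    have hcont : Continuous fun z => K * dist z x ^ α :=
      continuous_const.mul ((continuous_id.dist continuous_const).rpow_const fun _ => Or.inr hα.le)
    simpa [Real.zero_rpow hα.ne'] using hcont.tendsto x
  refine tendsto_iff_dist_tendsto_zero.2 <|
    squeeze_zero' (Eventually.of_forall fun _ => dist_nonneg) ?_ (hlim.mono_left nhdsWithin_le_nhds)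
  filter_upwards [self_mem_nhdsWithin] with z hz
  exact (Real.dist_eq _ _).trans_le (hf z hz x hx)

lemma abs_indicator_sub_indicator_le {X : Type*} {s t : Set X} {f : X → ℝ} {a b : X} {L M : ℝ}
    (hL : 0 ≤ L) (hM : 0 ≤ M) (hfM : ∀ x ∈ s, |f x| ≤ M)
    (hfL : a ∈ s → b ∈ s → |f a - f b| ≤ L) (ht : ¬(a ∈ s ↔ b ∈ s) → b ∈ t) :
    |s.indicator f a - s.indicator f b| ≤
      s.indicator (fun _ => L) b + t.indicator (fun _ => M) b := by
  have hL' : 0 ≤ s.indicator (fun _ => L) b := indicator_nonneg (fun _ _ => hL) b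
  have hM' : 0 ≤ t.indicator (fun _ => M) b := indicator_nonneg (fun _ _ => hM) b
  by_cases ha : a ∈ s <;> by_cases hb : b ∈ s
  · rw [indicator_of_mem ha, indicator_of_mem hb, indicator_of_mem hb]
    linarith [hfL ha hb]
  · rw [indicator_of_mem ha, indicator_of_notMem hb, indicator_of_notMem hb,
      indicator_of_mem (ht (by tauto)), sub_zero]
    linarith [hfM a ha]
  · rw [indicator_of_notMem ha, indicator_of_mem hb, indicator_of_mem (ht (by tauto)), zero_sub,
      abs_neg]
    linarith [hfM b hb]
  · rw [indicator_of_notMem ha, indicator_of_notMem hb, sub_self, abs_zero]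
    positivity

section NormedSpace

variable {E : Type*} [NormedAddCommGroup E] [NormedSpace ℝ E]

theorem mem_cthickening_frontier_of_not_iff {s : Set E} {a b : E} (h : ¬(a ∈ s ↔ b ∈ s)) :
    b ∈ cthickening (dist a b) (frontier s) := by
  wlog ha : a ∈ s generalizing s
  · simpa only [frontier_compl] using this (s := sᶜ) (by simpa only [mem_compl_iff, not_iff_not])
      (by simpa only [mem_compl_iff] using ha)
  have hb : b ∉ s := by tauto
  obtain ⟨q, hq, hqs⟩ := (convex_segment a b).isPreconnected.inter_frontier_nonempty
    ⟨a, left_mem_segment ℝ a b, ha⟩ ⟨b, right_mem_segment ℝ a b, hb⟩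
  refine mem_cthickening_of_dist_le b q _ _ hqs ?_
  linarith [dist_add_dist_of_mem_segment hq, dist_nonneg (x := a) (y := q), dist_comm b q]

variable [MeasurableSpace E] [BorelSpace E] {μ : Measure E}

lemma integral_abs_indicator_comp_sub_sub_le {s : Set E} {f : E → ℝ} {y : E} {L M : ℝ}
    (hs : MeasurableSet s) (hμs : μ s ≠ ∞) (hμT : μ (cthickening ‖y‖ (frontier s)) ≠ ∞)
    (hL : 0 ≤ L) (hM : 0 ≤ M) (hfM : ∀ x ∈ s, |f x| ≤ M)
    (hfL : ∀ x, x - y ∈ s → x ∈ s → |f (x - y) - f x| ≤ L) :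
    ∫ x, |s.indicator f (x - y) - s.indicator f x| ∂μ ≤
      L * μ.real s + M * μ.real (cthickening ‖y‖ (frontier s)) := by
  set T := cthickening ‖y‖ (frontier s)
  have hT : MeasurableSet T := isClosed_cthickening.measurableSet
  have hLi : Integrable (s.indicator fun _ => L) μ :=
    (integrable_indicator_iff hs).2 (integrableOn_const hμs)
  have hMi : Integrable (T.indicator fun _ => M) μ :=
    (integrable_indicator_iff hT).2 (integrableOn_const hμT)
  have hpt : ∀ x, |s.indicator f (x - y) - s.indicator f x| ≤
      s.indicator (fun _ => L) x + T.indicator (fun _ => M) x := fun x =>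
    abs_indicator_sub_indicator_le hL hM hfM (hfL x) fun h => by
      simpa [T, dist_eq_norm] using mem_cthickening_frontier_of_not_iff h
  calc ∫ x, |s.indicator f (x - y) - s.indicator f x| ∂μ
      ≤ ∫ x, (s.indicator (fun _ => L) x + T.indicator (fun _ => M) x) ∂μ :=
        integral_mono_of_nonneg (ae_of_all _ fun _ => abs_nonneg _) (hLi.add hMi) (ae_of_all _ hpt)
    _ = L * μ.real s + M * μ.real T := by
        rw [integral_add hLi hMi, integral_indicator_const _ hs, integral_indicator_const _ hT,
          smul_eq_mul, smul_eq_mul, mul_comm L, mul_comm M]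

end NormedSpace

section Slab

variable {E : Type*} [NormedAddCommGroup E] [NormedSpace ℝ E] [MeasurableSpace E] [BorelSpace E]
  {μ : Measure E} [μ.IsAddRightInvariant] {g : E → ℝ} {p v : E} {ρ a ε : ℝ}

-- The translates of the slab by `j * τ • v`, `j < N`, are pairwise disjoint: along `v`, `g` moves
-- by at least `a * τ > 2 * ε` between any two of them.
lemma natCast_mul_measure_le_of_slope (hg : Continuous g) (hv : ‖v‖ ≤ 1) (ha : 0 ≤ a)
    {τ : ℝ} {N : ℕ} (hτ : 0 ≤ τ) (hετ : 2 * ε < a * τ) (hNτ : N * τ ≤ ρ)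
    (hslope : ∀ x ∈ closedBall p ρ, ∀ t ∈ Icc 0 ρ, a * t ≤ |g (x + t • v) - g x|) :
    N * μ {x ∈ ball p ρ | |g x| ≤ ε} ≤ μ (ball p (2 * ρ)) := by
  set A := {x ∈ ball p ρ | |g x| ≤ ε}
  have hA : MeasurableSet A :=
    measurableSet_ball.inter (measurableSet_le hg.abs.measurable measurable_const)
  set S : ℕ → Set E := fun j => (· + (j * τ) • v) ⁻¹' A
  have hjτ : ∀ j < N, 0 ≤ (j : ℝ) * τ ∧ (j : ℝ) * τ ≤ ρ := fun j hj =>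
    ⟨by positivity, le_trans (by gcongr) hNτ⟩
  have hS_sub : ∀ j < N, S j ⊆ ball p (2 * ρ) := by
    intro j hj x hx
    have hshift : ‖(j * τ : ℝ) • v‖ ≤ ρ := by
      rw [norm_smul, Real.norm_of_nonneg (hjτ j hj).1]
      nlinarith [hjτ j hj, norm_nonneg v]
    calc dist x p ≤ dist x (x + (j * τ : ℝ) • v) + dist (x + (j * τ : ℝ) • v) p :=
          dist_triangle _ _ _
      _ < 2 * ρ := by rw [dist_self_add_right]; linarith [mem_ball.1 hx.1]
  have hS_disj : ∀ i j, i < j → j < N → Disjoint (S i) (S j) := by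
    intro i j hij hj
    refine Set.disjoint_left.2 fun x hxi hxj => ?_
    have hji : (1 : ℝ) ≤ j - i := by
      have : (i : ℝ) + 1 ≤ j := by exact_mod_cast hij
      linarith
    have hshift : x + (j * τ : ℝ) • v = (x + (i * τ : ℝ) • v) + ((j - i) * τ) • v := by module
    have hst := hslope _ (ball_subset_closedBall hxi.1) ((j - i) * τ)
      ⟨by nlinarith, by nlinarith [hjτ j hj, (Nat.cast_nonneg i : (0 : ℝ) ≤ i)]⟩
    rw [← hshift] at hst
    have hdiff : |g (x + (j * τ : ℝ) • v) - g (x + (i * τ : ℝ) • v)| ≤ ε + ε :=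
      (abs_sub _ _).trans (add_le_add hxj.2 hxi.2)
    have hτ_le : a * τ ≤ a * ((j - i) * τ) := by
      nlinarith [mul_nonneg ha (mul_nonneg (sub_nonneg.2 hji) hτ)]
    linarith
  calc N * μ A = ∑ j ∈ Finset.range N, μ (S j) := by
        simp only [S, measure_preimage_add_right, Finset.sum_const, Finset.card_range, nsmul_eq_mul]
    _ = μ (⋃ j ∈ Finset.range N, S j) := by
        refine (measure_biUnion_finset (fun i hi j hj hij => ?_)
          fun j _ => hA.preimage (measurable_add_const _)).symm
        rcases hij.lt_or_gt with h | h
        · exact hS_disj i j h (Finset.mem_range.1 hj)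
        · exact (hS_disj j i h (Finset.mem_range.1 hi)).symm
    _ ≤ μ (ball p (2 * ρ)) :=
        measure_mono (iUnion₂_subset fun j hj => hS_sub j (Finset.mem_range.1 hj))

lemma ofReal_mul_measure_le_of_slope (hg : Continuous g) (hv : ‖v‖ ≤ 1) (ha : 0 < a)
    (hε : 0 < ε) (hρ : 0 ≤ ρ)
    (hslope : ∀ x ∈ closedBall p ρ, ∀ t ∈ Icc 0 ρ, a * t ≤ |g (x + t • v) - g x|) :
    ENNReal.ofReal (a * ρ) * μ {x ∈ ball p ρ | |g x| ≤ ε} ≤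
      ENNReal.ofReal (6 * ε) * μ (ball p (2 * ρ)) := by
  set τ := 3 * ε / a
  have hτ : 0 < τ := by positivity
  have haτ : a * τ = 3 * ε := mul_div_cancel₀ _ ha.ne'
  set N := ⌊ρ / τ⌋₊
  have hNτ : N * τ ≤ ρ := (le_div_iff₀ hτ).1 (Nat.floor_le (by positivity))
  have hρN : ρ < (N + 1) * τ := (div_lt_iff₀ hτ).1 (Nat.lt_floor_add_one _)
  have hcount := natCast_mul_measure_le_of_slope (μ := μ) (ε := ε) hg hv ha.le hτ.le
    (by linarith) hNτ hslope
  rcases Nat.eq_zero_or_pos N with hN | hN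
  · have hA : {x ∈ ball p ρ | |g x| ≤ ε} ⊆ ball p (2 * ρ) :=
      fun x hx => ball_subset_ball (by linarith) hx.1
    refine mul_le_mul' (ENNReal.ofReal_le_ofReal ?_) (measure_mono hA)
    rw [hN, Nat.cast_zero, zero_add, one_mul] at hρN
    nlinarith
  · calc ENNReal.ofReal (a * ρ) * μ {x ∈ ball p ρ | |g x| ≤ ε}
        ≤ ENNReal.ofReal (6 * ε * N) * μ {x ∈ ball p ρ | |g x| ≤ ε} := by
          refine mul_le_mul_left (ENNReal.ofReal_le_ofReal ?_) _
          have : (1 : ℝ) ≤ N := by exact_mod_cast hN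
          nlinarith
      _ = ENNReal.ofReal (6 * ε) * (N * μ {x ∈ ball p ρ | |g x| ≤ ε}) := by
          rw [ENNReal.ofReal_mul (by positivity), ENNReal.ofReal_natCast, mul_assoc]
      _ ≤ ENNReal.ofReal (6 * ε) * μ (ball p (2 * ρ)) := by gcongr

end Slab

section LocalBound

variable {E : Type*} [NormedAddCommGroup E] [NormedSpace ℝ E] {g : E → ℝ} {p : E}

theorem ContDiff.exists_closedBall_abs_sub_sub_fderiv_le (hg : ContDiff ℝ 1 g) {U : Set E}
    (hU : U ∈ 𝓝 p) {c : ℝ} (hc : 0 < c) :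
    ∃ R > 0, closedBall p R ⊆ U ∧ ∀ x ∈ closedBall p R, ∀ z ∈ closedBall p R,
      |g x - g z - fderiv ℝ g p (x - z)| ≤ c * ‖x - z‖ := by
  have hD : ∀ᶠ z in 𝓝 p, fderiv ℝ g z ∈ closedBall (fderiv ℝ g p) c :=
    (hg.continuous_fderiv one_ne_zero).continuousAt (closedBall_mem_nhds _ hc)
  obtain ⟨R, hR, hRsub⟩ := nhds_basis_closedBall.mem_iff.1 (inter_mem hU hD)
  refine ⟨R, hR, fun z hz => (hRsub hz).1, fun x hx z hz => ?_⟩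
  exact (convex_closedBall p R).norm_image_sub_le_of_norm_fderiv_le'
    (fun w _ => hg.differentiable one_ne_zero w)
    (fun w hw => mem_closedBall_iff_norm.1 (hRsub hw).2) hz hx

lemma mul_le_abs_sub_of_abs_sub_sub_le {D : E →L[ℝ] ℝ} {v : E} {R ρ a c : ℝ}
    (happrox : ∀ x ∈ closedBall p R, ∀ z ∈ closedBall p R,
      |g x - g z - D (x - z)| ≤ c * ‖x - z‖)
    (hρR : 2 * ρ ≤ R) (hc : 0 ≤ c) (hv : ‖v‖ ≤ 1) (hDv : a + c ≤ |D v|) :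
    ∀ x ∈ closedBall p ρ, ∀ t ∈ Icc 0 ρ, a * t ≤ |g (x + t • v) - g x| := by
  intro x hx t ⟨ht0, htρ⟩
  have htv : ‖t • v‖ ≤ t := by
    rw [norm_smul, Real.norm_of_nonneg ht0]
    nlinarith
  have hx' : x ∈ closedBall p R := closedBall_subset_closedBall (by linarith) hx
  have hxt : x + t • v ∈ closedBall p R := by
    rw [mem_closedBall] at hx ⊢
    linarith [dist_triangle (x + t • v) x p, dist_self_add_left (t • v) x]
  have h := happrox _ hxt x hx'
  rw [add_sub_cancel_left, map_smul, smul_eq_mul] at h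
  have hlin : (a + c) * t ≤ |t * D v| := by
    rw [abs_mul, abs_of_nonneg ht0, mul_comm]
    exact mul_le_mul_of_nonneg_left hDv ht0
  linarith [abs_sub_abs_le_abs_sub (t * D v) (g (x + t • v) - g x),
    abs_sub_comm (t * D v) (g (x + t • v) - g x), mul_le_mul_of_nonneg_left htv hc]

theorem exists_measure_ball_inter_thickening_le [ProperSpace E] [MeasurableSpace E]
    [BorelSpace E] (μ : Measure E) [μ.IsAddRightInvariant] [IsFiniteMeasureOnCompacts μ]
    {F U : Set E} (hU : U ∈ 𝓝 p) (hg : ContDiff ℝ 1 g) (hgp : fderiv ℝ g p ≠ 0)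
    (hFU : ∀ q ∈ F ∩ U, g q = 0) :
    ∃ ρ > 0, ∃ c ≥ 0, ∀ r ∈ Ioc 0 ρ, μ (ball p ρ ∩ thickening r F) ≤ ENNReal.ofReal (c * r) := by
  have hm : 0 < ‖fderiv ℝ g p‖ := norm_pos_iff.2 hgp
  obtain ⟨R, hR, hRU, happrox⟩ := hg.exists_closedBall_abs_sub_sub_fderiv_le hU
    (c := ‖fderiv ℝ g p‖ / 4) (by positivity)
  set D := fderiv ℝ g p
  obtain ⟨v, hv, hDv⟩ := D.exists_lt_apply_of_lt_opNorm (show 3 * ‖D‖ / 4 < ‖D‖ by linarith)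
  set ρ := R / 2 with hρ
  have hslope := mul_le_abs_sub_of_abs_sub_sub_le happrox (ρ := ρ) (a := ‖D‖ / 2)
    (by rw [hρ]; linarith) (by positivity) hv.le (by rw [← Real.norm_eq_abs]; linarith)
  have hsub : ∀ r ∈ Ioc 0 ρ,
      ball p ρ ∩ thickening r F ⊆ {x ∈ ball p ρ | |g x| ≤ 5 * ‖D‖ / 4 * r} := by
    rintro r ⟨-, hrρ⟩ x ⟨hx, hxF⟩
    obtain ⟨q, hqF, hxq⟩ := mem_thickening_iff.1 hxF
    have hx' : x ∈ closedBall p R := closedBall_subset_closedBall (by linarith)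
      (ball_subset_closedBall hx)
    have hq : q ∈ closedBall p R := by
      rw [mem_closedBall]
      linarith [dist_triangle q x p, dist_comm q x, mem_ball.1 hx]
    have h := happrox x hx' q hq
    rw [hFU q ⟨hqF, hRU hq⟩, sub_zero] at h
    have hxq' : ‖x - q‖ ≤ r := (dist_eq_norm x q ▸ hxq).le
    refine ⟨hx, ?_⟩
    have hDxq : |D (x - q)| ≤ ‖D‖ * ‖x - q‖ := D.le_opNorm _
    linarith [abs_sub_abs_le_abs_sub (g x) (D (x - q)), mul_le_mul_of_nonneg_left hxq' hm.le]
  refine ⟨ρ, by positivity, 15 * μ.real (ball p (2 * ρ)) / ρ, by positivity, ?_⟩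
  rintro r ⟨hr, hrρ⟩
  have hslab := ofReal_mul_measure_le_of_slope (μ := μ) hg.continuous hv.le (half_pos hm)
    (by positivity : 0 < 5 * ‖D‖ / 4 * r) (by positivity) hslope
  have hmρ : ENNReal.ofReal (‖D‖ / 2 * ρ) ≠ 0 := (ENNReal.ofReal_pos.2 (by positivity)).ne'
  calc μ (ball p ρ ∩ thickening r F) ≤ μ {x ∈ ball p ρ | |g x| ≤ 5 * ‖D‖ / 4 * r} :=
        measure_mono (hsub r ⟨hr, hrρ⟩)
    _ ≤ ENNReal.ofReal (6 * (5 * ‖D‖ / 4 * r)) * μ (ball p (2 * ρ)) /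
          ENNReal.ofReal (‖D‖ / 2 * ρ) := by
        rw [ENNReal.le_div_iff_mul_le (Or.inl hmρ) (Or.inl ENNReal.ofReal_ne_top), mul_comm]
        exact hslab
    _ = ENNReal.ofReal (15 * μ.real (ball p (2 * ρ)) / ρ * r) := by
        rw [← ofReal_measureReal measure_ball_lt_top.ne, ← ENNReal.ofReal_mul (by positivity),
          ← ENNReal.ofReal_div_of_pos (by positivity)]
        congr 1
        field_simp
        ring

end LocalBound

theorem IsCompact.exists_measure_thickening_le {X : Type*} [PseudoMetricSpace X]
    [MeasurableSpace X] {μ : Measure X} {F : Set X} (hF : IsCompact F)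
    (hloc : ∀ p ∈ F, ∃ ρ > 0, ∃ c ≥ 0, ∀ r ∈ Ioc 0 ρ,
      μ (ball p ρ ∩ thickening r F) ≤ ENNReal.ofReal (c * r)) :
    ∃ r₀ > 0, ∃ c ≥ 0, ∀ r ∈ Ioc 0 r₀, μ (thickening r F) ≤ ENNReal.ofReal (c * r) := by
  choose! ρ hρ c hc hbound using hloc
  obtain ⟨t, htF, hFt⟩ := hF.elim_nhds_subcover (fun p => ball p (ρ p / 2))
    fun p hp => ball_mem_nhds p (half_pos (hρ p hp))
  have hsmall : ∀ᶠ r in 𝓝 (0 : ℝ), ∀ p ∈ t, r < ρ p / 2 :=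
    (eventually_all_finset t).2 fun p hp => eventually_lt_nhds (half_pos (hρ p (htF p hp)))
  obtain ⟨r₀, hr₀t, hr₀⟩ :=
    ((hsmall.filter_mono nhdsWithin_le_nhds).and self_mem_nhdsWithin).exists (f := 𝓝[>] 0)
  refine ⟨r₀, hr₀, ∑ p ∈ t, c p, Finset.sum_nonneg fun p hp => hc p (htF p hp), fun r hr => ?_⟩
  have hcover : thickening r F ⊆ ⋃ p ∈ t, ball p (ρ p) ∩ thickening r F := by
    intro x hx
    obtain ⟨q, hqF, hxq⟩ := mem_thickening_iff.1 hx
    obtain ⟨p, hpt, hqp⟩ := mem_iUnion₂.1 (hFt hqF)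
    refine mem_iUnion₂.2 ⟨p, hpt, mem_ball.2 ?_, hx⟩
    linarith [dist_triangle x q p, mem_ball.1 hqp, hr₀t p hpt, hr.2]
  calc μ (thickening r F) ≤ ∑ p ∈ t, μ (ball p (ρ p) ∩ thickening r F) :=
        (measure_mono hcover).trans (measure_biUnion_finset_le t _)
    _ ≤ ∑ p ∈ t, ENNReal.ofReal (c p * r) := Finset.sum_le_sum fun p hp =>
        hbound p (htF p hp) r ⟨hr.1, by linarith [hr₀t p hp, hρ p (htF p hp), hr.2]⟩
    _ = ENNReal.ofReal ((∑ p ∈ t, c p) * r) := by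
        rw [Finset.sum_mul,
          ENNReal.ofReal_sum_of_nonneg fun p hp => mul_nonneg (hc p (htF p hp)) hr.1.le]

theorem HasC1Boundary.exists_volume_thickening_frontier_le {n : ℕ}
    {Ω : Set (EuclideanSpace ℝ (Fin n))} (hΩ : HasC1Boundary Ω) (hbdd : Bornology.IsBounded Ω) :
    ∃ r₀ > 0, ∃ c ≥ 0, ∀ r ∈ Ioc 0 r₀,
      volume (thickening r (frontier Ω)) ≤ ENNReal.ofReal (c * r) := by
  have hF : IsCompact (frontier Ω) :=
    isCompact_of_isClosed_isBounded isClosed_frontier (hbdd.closure.subset frontier_subset_closure)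
  refine hF.exists_measure_thickening_le fun p hp => ?_
  obtain ⟨U, hU, hpU, g, hg, hg', -, hfr⟩ := hΩ p hp
  exact exists_measure_ball_inter_thickening_le volume (hU.mem_nhds hpU) hg (hg' p hpU)
    fun q hq => (hfr ▸ hq : q ∈ {z ∈ U | g z = 0}).2

theorem holder_modulus_of_zero_extension_general (n : ℕ) (Ω : Set (EuclideanSpace ℝ (Fin n)))
    (hΩopen : IsOpen Ω) (hΩbdd : Bornology.IsBounded Ω)
    (hΩbd : HasC1Boundary Ω) (f : EuclideanSpace ℝ (Fin n) → ℝ) (α K : ℝ)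
    (hα : α ∈ Set.Ioo (0 : ℝ) 1) (hK : 0 ≤ K)
    (hf : ∀ x ∈ closure Ω, ∀ z ∈ closure Ω, |f x - f z| ≤ K * ‖x - z‖ ^ α) :
    ∃ δ > 0, ∃ C > 0, ∀ y : EuclideanSpace ℝ (Fin n), ‖y‖ ≤ δ →
      (∫ x, |Ω.indicator f (x - y) - Ω.indicator f x|) ≤ C * ‖y‖ ^ α := by
  obtain ⟨r₀, hr₀, c, hc, htube⟩ := hΩbd.exists_volume_thickening_frontier_le hΩbdd
  obtain ⟨M, hM⟩ := hΩbdd.isCompact_closure.exists_bound_of_continuousOn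
    (continuousOn_of_abs_sub_le_mul_rpow hα.1 (by simpa only [dist_eq_norm] using hf))
  refine ⟨min 1 (r₀ / 2), by positivity, K * volume.real Ω + max M 0 * (2 * c) + 1, by positivity,
    fun y hy => ?_⟩
  rcases eq_or_ne y 0 with rfl | hy0
  · simp [Real.zero_rpow hα.1.ne']
  have hy_pos : 0 < ‖y‖ := norm_pos_iff.2 hy0
  have hT : volume (cthickening ‖y‖ (frontier Ω)) ≤ ENNReal.ofReal (c * (2 * ‖y‖)) :=
    (measure_mono (cthickening_subset_thickening' (by positivity) (by linarith) _)).trans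
      (htube _ ⟨by positivity, by linarith [hy.trans (min_le_right _ _)]⟩)
  have hyα : ‖y‖ ≤ ‖y‖ ^ α :=
    Real.self_le_rpow_of_le_one (norm_nonneg y) (hy.trans (min_le_left _ _)) hα.2.le
  calc (∫ x, |Ω.indicator f (x - y) - Ω.indicator f x|)
      ≤ K * ‖y‖ ^ α * volume.real Ω + max M 0 * volume.real (cthickening ‖y‖ (frontier Ω)) :=
        integral_abs_indicator_comp_sub_sub_le hΩopen.measurableSet hΩbdd.measure_lt_top.ne
          (ne_top_of_le_ne_top ENNReal.ofReal_ne_top hT) (by positivity) (le_max_right _ _)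
          (fun x hx => (hM x (subset_closure hx)).trans (le_max_left _ _))
          fun x hxy hx => by
            simpa [norm_neg] using hf (x - y) (subset_closure hxy) x (subset_closure hx)
    _ ≤ K * ‖y‖ ^ α * volume.real Ω + max M 0 * (c * (2 * ‖y‖ ^ α)) := by
        gcongr
        exact (ENNReal.toReal_le_of_le_ofReal (by positivity) hT).trans (by gcongr)
    _ ≤ (K * volume.real Ω + max M 0 * (2 * c) + 1) * ‖y‖ ^ α := by
        nlinarith [Real.rpow_nonneg (norm_nonneg y) α]

/-- The zero extension of an `α`-Hölder function on a bounded `C¹` domain has an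
`α`-Hölder `L¹`-modulus of continuity. -/
theorem holder_modulus_of_zero_extension (n : ℕ) (Ω : Set (EuclideanSpace ℝ (Fin n)))
    (hΩopen : IsOpen Ω) (hΩbdd : Bornology.IsBounded Ω) (hΩconn : IsConnected Ω)
    (hΩbd : HasC1Boundary Ω) (f : EuclideanSpace ℝ (Fin n) → ℝ) (α K : ℝ)
    (hα : α ∈ Set.Ioo (0 : ℝ) 1) (hK : 0 ≤ K)
    (hf : ∀ x ∈ closure Ω, ∀ z ∈ closure Ω, |f x - f z| ≤ K * ‖x - z‖ ^ α) :
    ∃ δ > 0, ∃ C > 0, ∀ y : EuclideanSpace ℝ (Fin n), ‖y‖ ≤ δ →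
      (∫ x, |Ω.indicator f (x - y) - Ω.indicator f x|) ≤ C * ‖y‖ ^ α :=
  holder_modulus_of_zero_extension_general n Ω hΩopen hΩbdd hΩbd f α K hα hK hf
end
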